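/- arXiv:2109.12972 — 2 statements merged into one kernel-verified Lean document; each statement's English description precedes it below -/
import Mathlib

section
/- ψ₁(4/5) − ψ₁(3/5) + ψ₁(1/5) − ψ₁(2/5) = (4/5)π²√5, where ψ₁(x) = Σ_{n=0}^∞ 1/(n+x)². -/
open Real

/-- The trigamma function `ψ₁(x) = Σ_{n≥0} 1/(n+x)²`. -/
noncomputable def trigamma (x : ℝ) : ℝ := ∑' n : ℕ, 1 / ((n : ℝ) + x)^2


lemma bern2 (x : ℝ) : (Polynomial.map (algebraMap ℚ ℝ) (Polynomial.bernoulli 2)).eval x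
    = x^2 - x + 1/6 := by
  have h2 : _root_.bernoulli 2 = 1/6 := by
    rw [bernoulli_eq_bernoulli'_of_ne_one (by norm_num), bernoulli'_two]
  simp [Polynomial.bernoulli, Finset.sum_range_succ, _root_.bernoulli_zero, _root_.bernoulli_one, h2]
  ring

lemma cos_sum {x : ℝ} (hx : x ∈ Set.Icc (0:ℝ) 1) :
    HasSum (fun n : ℕ => 1 / (n : ℝ) ^ 2 * Real.cos (2 * π * n * x))
      (π ^ 2 * (x ^ 2 - x + 1/6)) := by
  have h := hasSum_one_div_nat_pow_mul_cos (k := 1) one_ne_zero hx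
  norm_num at h
  have hb : (Polynomial.aeval x) (Polynomial.bernoulli 2) = x^2 - x + 1/6 := by
    rw [Polynomial.aeval_def, ← Polynomial.eval_map]; exact bern2 x
  rw [hb] at h
  have : (2 * π) ^ 2 / 2 / 2 * (x^2 - x + 1/6) = π ^ 2 * (x ^ 2 - x + 1/6) := by ring
  rw [this] at h
  exact h.congr_fun fun n => by rw [one_div]

lemma cos_2pi5 : Real.cos (2 * π / 5) = (Real.sqrt 5 - 1) / 4 := by
  have h := Real.cos_pi_div_five
  have hd : Real.cos (2 * (π / 5)) = 2 * Real.cos (π/5)^2 - 1 := Real.cos_two_mul _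
  have h5 : Real.sqrt 5 ^ 2 = 5 := Real.sq_sqrt (by norm_num)
  rw [show 2 * π / 5 = 2 * (π/5) by ring, hd, h]
  nlinarith [h5]

lemma cos_4pi5 : Real.cos (4 * π / 5) = -(1 + Real.sqrt 5) / 4 := by
  have hd : Real.cos (2 * (2 * π / 5)) = 2 * Real.cos (2*π/5)^2 - 1 := Real.cos_two_mul _
  have h5 : Real.sqrt 5 ^ 2 = 5 := Real.sq_sqrt (by norm_num)
  rw [show 4 * π / 5 = 2 * (2 * π/5) by ring, hd, cos_2pi5]
  nlinarith [h5]

lemma cos_6pi5 : Real.cos (6 * π / 5) = -(1 + Real.sqrt 5) / 4 := by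
  rw [show 6 * π / 5 = 2 * π - 4 * π / 5 by ring, Real.cos_two_pi_sub, cos_4pi5]

lemma cos_8pi5 : Real.cos (8 * π / 5) = (Real.sqrt 5 - 1) / 4 := by
  rw [show 8 * π / 5 = 2 * π - 2 * π / 5 by ring, Real.cos_two_pi_sub, cos_2pi5]

/-- coefficient identity -/
lemma coeff_id (q : ℕ) (r : Fin 5) :
    2 * Real.cos (2 * π * (5*q+(r:ℕ)) * (1/5)) - 2 * Real.cos (2 * π * (5*q+(r:ℕ)) * (2/5))
    = ![0, Real.sqrt 5, -Real.sqrt 5, -Real.sqrt 5, Real.sqrt 5] r := by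
  have e1 : 2 * π * (5*(q:ℝ)+(r:ℕ)) * (1/5) = 2 * π * (r:ℕ) / 5 + q * (2 * π) := by ring
  have e2 : 2 * π * (5*(q:ℝ)+(r:ℕ)) * (2/5) = 4 * π * (r:ℕ) / 5 + ((2*q : ℕ):ℝ) * (2 * π) := by
    push_cast; ring
  rw [e1, e2, Real.cos_add_nat_mul_two_pi, Real.cos_add_nat_mul_two_pi]
  have c12 : Real.cos (12 * π / 5) = (Real.sqrt 5 - 1)/4 := by
    rw [show 12 * π / 5 = 2 * π / 5 + (1:ℕ) * (2 * π) by push_cast; ring,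
      Real.cos_add_nat_mul_two_pi, cos_2pi5]
  have c16 : Real.cos (16 * π / 5) = -(1 + Real.sqrt 5)/4 := by
    rw [show 16 * π / 5 = 6 * π / 5 + (1:ℕ) * (2 * π) by push_cast; ring,
      Real.cos_add_nat_mul_two_pi, cos_6pi5]
  fin_cases r <;> simp
  · rw [cos_2pi5, cos_4pi5]; ring
  · rw [show 2 * π * 2 / 5 = 4 * π / 5 by ring, show 4 * π * 2 / 5 = 8 * π/5 by ring,
      cos_4pi5, cos_8pi5]; ring
  · rw [show 2 * π * 3 / 5 = 6 * π / 5 by ring, show 4 * π * 3 / 5 = 12 * π/5 by ring,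
      cos_6pi5, c12]; ring
  · rw [show 2 * π * 4 / 5 = 8 * π / 5 by ring, show 4 * π * 4 / 5 = 16 * π/5 by ring,
      cos_8pi5, c16]; ring


lemma summable_tri (x : ℝ) : Summable (fun n : ℕ => 1/((n:ℝ)+x)^2) := by
  have h := (Real.summable_one_div_nat_add_rpow x 2).mpr one_lt_two
  refine h.congr fun n => ?_
  rw [show (2:ℝ) = ((2:ℕ):ℝ) by norm_num, Real.rpow_natCast, sq_abs]

noncomputable def cvec : Fin 5 → ℝ := ![0, Real.sqrt 5, -Real.sqrt 5, -Real.sqrt 5, Real.sqrt 5]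

lemma key (q : ℕ) (r : Fin 5) :
    2 * (1/((q*5+(r:ℕ) : ℕ):ℝ)^2 * Real.cos (2*π*((q*5+(r:ℕ) : ℕ):ℝ)*(1/5)))
      - 2 * (1/((q*5+(r:ℕ) : ℕ):ℝ)^2 * Real.cos (2*π*((q*5+(r:ℕ) : ℕ):ℝ)*(2/5)))
    = cvec r / 25 * (1/((q:ℝ)+(r:ℕ)/5)^2) := by
  have hc := coeff_id q r
  have hcast : ((q*5+(r:ℕ) : ℕ):ℝ) = 5*(q:ℝ)+(r:ℕ) := by push_cast; ring
  rw [hcast]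
  rw [show ∀ A B : ℝ, 2 * (1/(5*(q:ℝ)+(r:ℕ))^2 * A) - 2 * (1/(5*(q:ℝ)+(r:ℕ))^2 * B)
      = (2*A - 2*B) * (1/(5*(q:ℝ)+(r:ℕ))^2) from fun A B => by ring, hc]
  have h25 : (1:ℝ)/(5*(q:ℝ)+(r:ℕ))^2 = 1/25 * (1/((q:ℝ)+(r:ℕ)/5)^2) := by
    rw [show (5*(q:ℝ)+(r:ℕ))^2 = 25*(((q:ℝ)+(r:ℕ)/5))^2 by ring, one_div, mul_inv]
    norm_num [one_div]
  rw [h25, cvec]; ring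

/-- `ψ₁(4/5) − ψ₁(3/5) + ψ₁(1/5) − ψ₁(2/5) = (4/5)π²√5`. -/
theorem trigamma_eval_sqrt_five :
    trigamma (4/5) - trigamma (3/5) + trigamma (1/5) - trigamma (2/5) =
      (4/5) * π^2 * Real.sqrt 5 := by
  set f : ℕ → ℝ := fun n =>
    2 * (1/(n:ℝ)^2 * Real.cos (2*π*(n:ℝ)*(1/5))) - 2 * (1/(n:ℝ)^2 * Real.cos (2*π*(n:ℝ)*(2/5)))
    with hf_def
  have h1 : (1/5 : ℝ) ∈ Set.Icc (0:ℝ) 1 := by norm_num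
  have h2 : (2/5 : ℝ) ∈ Set.Icc (0:ℝ) 1 := by norm_num
  have hf : HasSum f (2*(π^2*((1/5:ℝ)^2 - 1/5 + 1/6)) - 2*(π^2*((2/5:ℝ)^2 - 2/5 + 1/6))) :=
    ((cos_sum h1).mul_left 2).sub ((cos_sum h2).mul_left 2)
  have hT : HasSum f (4*π^2/25) := by
    convert hf using 1; ring
  -- transport along divMod equivalence
  have he : HasSum (fun p : ℕ × Fin 5 => f (p.1*5 + (p.2:ℕ))) (4*π^2/25) := by
    have := ((Nat.divModEquiv 5).symm.hasSum_iff (f := f)).mpr hT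
    exact this.congr_fun fun p => by simp [Nat.divModEquiv]
  have hswap : HasSum (fun p : Fin 5 × ℕ => f (p.2*5 + (p.1:ℕ))) (4*π^2/25) := by
    have := ((Equiv.prodComm (Fin 5) ℕ).hasSum_iff
      (f := fun p : ℕ × Fin 5 => f (p.1*5 + (p.2:ℕ)))).mpr he
    exact this.congr_fun fun p => rfl
  -- fiberwise sums
  have hfib : ∀ r : Fin 5, HasSum (fun q : ℕ => f (q*5 + (r:ℕ)))
      (cvec r / 25 * trigamma ((r:ℕ)/5)) := by
    intro r
    have hs : HasSum (fun q : ℕ => cvec r / 25 * (1/((q:ℝ)+(r:ℕ)/5)^2))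
        (cvec r / 25 * trigamma ((r:ℕ)/5)) :=
      (summable_tri ((r:ℕ)/5)).hasSum.mul_left _
    refine hs.congr_fun fun q => ?_
    rw [hf_def]
    exact key q r
  have hfin : HasSum (fun r : Fin 5 => cvec r / 25 * trigamma ((r:ℕ)/5)) (4*π^2/25) :=
    hswap.prod_fiberwise hfib
  have hsum : ∑ r : Fin 5, cvec r / 25 * trigamma ((r:ℕ)/5) = 4*π^2/25 :=
    (hasSum_fintype _).unique hfin
  rw [Fin.sum_univ_five] at hsum
  simp only [cvec] at hsum
  norm_num [show ((3:Fin 5):ℕ) = 3 from rfl, show ((4:Fin 5):ℕ) = 4 from rfl] at hsum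
  simp only [Matrix.cons_val] at hsum
  norm_num at hsum
  have h5 : Real.sqrt 5 * Real.sqrt 5 = 5 := Real.mul_self_sqrt (by norm_num)
  have hpos : (0:ℝ) < Real.sqrt 5 := Real.sqrt_pos.mpr (by norm_num)
  rw [show (4/5:ℝ)*π^2*Real.sqrt 5 = 4*π^2/Real.sqrt 5 by
    rw [eq_div_iff hpos.ne']; linear_combination (4/5*π^2) * h5]
  rw [eq_div_iff hpos.ne']
  linear_combination 25 * hsum
end

section
/- ψ₁(8/9) − ψ₁(5/9) + ψ₁(1/9) − ψ₁(4/9) = 8π²·cos(π/9), where ψ₁(x) = Σ_{n=0}^∞ 1/(n+x)². -/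
/-!
Reflection formula `ψ₁(x) + ψ₁(1 - x) = π² / sin²(πx)` for `0 < x < 1`, obtained by differentiating
the Mittag-Leffler expansion `π cot(πx) = 1/x + Σ_{n ≥ 1} (1/(x - n) + 1/(x + n))` term by term.
Pairing `1/9` with `8/9` and `4/9` with `5/9` reduces the claim to
`1/sin²(π/9) - 1/sin²(4π/9) = 8 cos(π/9)`, a polynomial identity in `c = cos(π/9)` modulo the
triple-angle relation `8c³ - 6c - 1 = 0`.
-/

open Real Set Filter Topology

theorem Real.hasDerivAt_cot {x : ℝ} (hx : sin x ≠ 0) : HasDerivAt cot (-1 / sin x ^ 2) x := by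
  rw [show cot = fun y => cos y / sin y from funext cot_eq_cos_div_sin]
  refine ((hasDerivAt_cos x).div (hasDerivAt_sin x) hx).congr_deriv ?_
  rw [← sin_sq_add_cos_sq x]
  ring

theorem Real.hasSum_cot_series {x : ℝ} (hx : ∀ n : ℤ, (n : ℝ) ≠ x) :
    HasSum (fun n : ℕ => 1 / (x - (n + 1)) + 1 / (x + (n + 1))) (π * cot (π * x) - 1 / x) := by
  have hxc : (x : ℂ) ∈ Complex.integerComplement := by
    rintro ⟨n, hn⟩
    exact hx n (mod_cast hn)
  rw [← Complex.hasSum_ofReal]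
  push_cast
  rw [cot_series_rep' hxc]
  exact (summable_cotTerm hxc).hasSum

theorem intCast_ne_of_mem_Ioo {y : ℝ} (hy : y ∈ Ioo 0 1) (n : ℤ) : (n : ℝ) ≠ y := by
  rintro rfl
  have h₀ : (0 : ℤ) < n := mod_cast hy.1
  have h₁ : n < 1 := mod_cast hy.2
  omega

theorem hasSum_trigamma (x : ℝ) : HasSum (fun n : ℕ => 1 / ((n : ℝ) + x) ^ 2) (trigamma x) := by
  have h := (summable_one_div_nat_add_rpow x 2).mpr one_lt_two
  simp only [rpow_two, sq_abs] at h
  exact h.hasSum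

theorem hasSum_one_div_sub_sq_add_one_div_add_sq (x : ℝ) :
    HasSum (fun n : ℕ => 1 / (x - (n + 1)) ^ 2 + 1 / (x + (n + 1)) ^ 2)
      (trigamma (1 - x) + (trigamma x - 1 / x ^ 2)) := by
  have h₁ : HasSum (fun n : ℕ => 1 / (x - (n + 1)) ^ 2) (trigamma (1 - x)) := by
    convert hasSum_trigamma (1 - x) using 3 with n
    ring
  have h₂ := (hasSum_nat_add_iff' 1).mpr (hasSum_trigamma x)
  rw [Finset.sum_range_one, Nat.cast_zero, zero_add] at h₂
  have e : (fun n : ℕ => 1 / (((n + 1 : ℕ) : ℝ) + x) ^ 2) =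
      fun n : ℕ => 1 / (x + (n + 1)) ^ 2 := by
    funext n
    push_cast
    ring
  rw [e] at h₂
  exact h₁.add h₂

theorem one_div_sub_sq_add_one_div_add_sq_le {b y : ℝ} (n : ℕ) (hy₀ : 0 ≤ y) (hyb : y < b)
    (hb : b < 1) :
    1 / (y - (n + 1)) ^ 2 + 1 / (y + (n + 1)) ^ 2 ≤
      (1 / (1 - b) ^ 2 + 1) * (1 / ((n : ℝ) + 1) ^ 2) := by
  have hn : (0 : ℝ) ≤ n := n.cast_nonneg
  have hdist : (1 - b) * (n + 1) ≤ n + 1 - y := by nlinarith [mul_nonneg hn (hy₀.trans hyb.le)]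
  have hsub : ((1 - b) * (n + 1)) ^ 2 ≤ (y - (n + 1)) ^ 2 := by
    rw [show (y - (n + 1)) ^ 2 = (n + 1 - y) ^ 2 by ring]
    exact pow_le_pow_left₀ (mul_nonneg (by linarith) (by positivity)) hdist 2
  have hadd : ((n : ℝ) + 1) ^ 2 ≤ (y + (n + 1)) ^ 2 := by nlinarith
  have hsub' := one_div_le_one_div_of_le (by positivity) hsub
  have hadd' := one_div_le_one_div_of_le (by positivity) hadd
  rw [mul_pow, ← one_div_mul_one_div] at hsub'
  linarith

theorem hasDerivAt_tsum_cot_series {x : ℝ} (hx₀ : 0 < x) (hx₁ : x < 1) :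
    HasDerivAt (fun y => ∑' n : ℕ, (1 / (y - ((n : ℝ) + 1)) + 1 / (y + ((n : ℝ) + 1))))
      (-(trigamma (1 - x) + (trigamma x - 1 / x ^ 2))) x := by
  -- On `(0, b)` with `b < 1` the termwise derivatives are uniformly `O(1 / (n + 1)²)`.
  set b := (1 + x) / 2 with hb
  have hb₁ : b < 1 := by linarith
  have hxb : x ∈ Ioo 0 b := ⟨hx₀, by linarith⟩
  have hderiv : ∀ (n : ℕ), ∀ y ∈ Ioo 0 b,
      HasDerivAt (fun y : ℝ => 1 / (y - (n + 1)) + 1 / (y + (n + 1)))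
        (-(1 / (y - (n + 1)) ^ 2 + 1 / (y + (n + 1)) ^ 2)) y := by
    rintro n y ⟨hy₀, hy₁⟩
    have h₁ : y - (n + 1) ≠ 0 := by linarith
    have h₂ : y + (n + 1) ≠ 0 := by linarith
    simp only [one_div]
    refine ((((hasDerivAt_id y).sub_const _).inv h₁).add
      (((hasDerivAt_id y).add_const _).inv h₂)).congr_deriv ?_
    simp
    ring
  have hbound : ∀ (n : ℕ), ∀ y ∈ Ioo 0 b, ‖-(1 / (y - (n + 1)) ^ 2 + 1 / (y + (n + 1)) ^ 2)‖ ≤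
      (1 / (1 - b) ^ 2 + 1) * (1 / ((n : ℝ) + 1) ^ 2) := by
    rintro n y ⟨hy₀, hy₁⟩
    rw [norm_eq_abs, abs_neg, abs_of_nonneg (by positivity)]
    exact one_div_sub_sq_add_one_div_add_sq_le n hy₀.le hy₁ hb₁
  have h := hasDerivAt_tsum_of_isPreconnected ((hasSum_trigamma 1).summable.mul_left _) isOpen_Ioo
    isPreconnected_Ioo hderiv hbound hxb
    (hasSum_cot_series (intCast_ne_of_mem_Ioo ⟨hx₀, hx₁⟩)).summable hxb
  rwa [tsum_neg, (hasSum_one_div_sub_sq_add_one_div_add_sq x).tsum_eq] at h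

theorem trigamma_add_trigamma_one_sub {x : ℝ} (hx₀ : 0 < x) (hx₁ : x < 1) :
    trigamma x + trigamma (1 - x) = π ^ 2 / sin (π * x) ^ 2 := by
  have hsin : sin (π * x) ≠ 0 :=
    (sin_pos_of_pos_of_lt_pi (by positivity) (by nlinarith [pi_pos])).ne'
  have hcot : HasDerivAt (fun y => π * cot (π * y) - 1 / y)
      (-(π ^ 2 / sin (π * x) ^ 2) + 1 / x ^ 2) x := by
    simp only [one_div]
    refine ((((hasDerivAt_cot hsin).comp x ((hasDerivAt_id x).const_mul π)).const_mul π).sub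
      (hasDerivAt_inv hx₀.ne')).congr_deriv ?_
    simp
    ring
  have hseries : (fun y => ∑' n : ℕ, (1 / (y - ((n : ℝ) + 1)) + 1 / (y + ((n : ℝ) + 1)))) =ᶠ[𝓝 x]
      fun y => π * cot (π * y) - 1 / y :=
    eventually_of_mem (isOpen_Ioo.mem_nhds ⟨hx₀, hx₁⟩) fun y hy =>
      (hasSum_cot_series (intCast_ne_of_mem_Ioo hy)).tsum_eq
  have h := (hasDerivAt_tsum_cot_series hx₀ hx₁).unique (hcot.congr_of_eventuallyEq hseries)
  linear_combination -h

theorem inv_sin_sq_pi_div_nine_sub_inv_sin_sq_four_pi_div_nine :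
    (sin (π / 9) ^ 2)⁻¹ - (sin (4 * π / 9) ^ 2)⁻¹ = 8 * cos (π / 9) := by
  set c := cos (π / 9)
  have hc : 4 * c ^ 3 - 3 * c = 1 / 2 := by
    rw [← cos_three_mul, show 3 * (π / 9) = π / 3 by ring, cos_pi_div_three]
  have h₂ : cos (2 * π / 9) = 2 * c ^ 2 - 1 := by
    rw [← cos_two_mul]
    ring_nf
  have h₄ : cos (4 * π / 9) = 2 * (2 * c ^ 2 - 1) ^ 2 - 1 := by
    rw [← h₂, ← cos_two_mul]
    ring_nf
  have hs₁ : 0 < sin (π / 9) := sin_pos_of_pos_of_lt_pi (by positivity) (by linarith [pi_pos])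
  have hs₄ : 0 < sin (4 * π / 9) := sin_pos_of_pos_of_lt_pi (by positivity) (by linarith [pi_pos])
  have key : sin (4 * π / 9) ^ 2 - sin (π / 9) ^ 2 =
      8 * c * (sin (π / 9) ^ 2 * sin (4 * π / 9) ^ 2) := by
    rw [sin_sq, sin_sq, h₄]
    -- the cofactor is the quotient of the difference of the two sides by `8c³ - 6c - 1`
    linear_combination
      2 * (1 - 6*c + 19*c^2 + 22*c^3 - 100*c^4 - 16*c^5 + 144*c^6 - 64*c^8) * hc
  rw [inv_sub_inv (by positivity) (by positivity), key, mul_div_assoc, div_self (by positivity),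
    mul_one]

/-- `ψ₁(8/9) − ψ₁(5/9) + ψ₁(1/9) − ψ₁(4/9) = 8π²cos(π/9)`. -/
theorem trigamma_eval_cos_pi_ninth :
    trigamma (8/9) - trigamma (5/9) + trigamma (1/9) - trigamma (4/9) =
      8 * π^2 * Real.cos (π / 9) := by
  have h₁ := trigamma_add_trigamma_one_sub (x := 1 / 9) (by norm_num) (by norm_num)
  have h₄ := trigamma_add_trigamma_one_sub (x := 4 / 9) (by norm_num) (by norm_num)
  rw [show π * (1 / 9) = π / 9 by ring] at h₁
  rw [show π * (4 / 9) = 4 * π / 9 by ring] at h₄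
  norm_num at h₁ h₄
  calc trigamma (8/9) - trigamma (5/9) + trigamma (1/9) - trigamma (4/9)
      = π ^ 2 * ((sin (π / 9) ^ 2)⁻¹ - (sin (4 * π / 9) ^ 2)⁻¹) := by
        rw [mul_sub, ← div_eq_mul_inv, ← div_eq_mul_inv]
        linarith
    _ = 8 * π^2 * Real.cos (π / 9) := by
        rw [inv_sin_sq_pi_div_nine_sub_inv_sin_sq_four_pi_div_nine]
        ring
end
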